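/- arXiv:1302.1320 — 4 statements merged into one kernel-verified Lean document; each statement's English description precedes it below -/
import Mathlib

section
/- Let a_1 < a_2 < ... < a_N be real numbers and λ_1,...,λ_N > 0. Then the function f(x) = x - Σ_{j=1}^N λ_j/(x - a_j) has exactly N+1 real zeros b_0 < b_1 < ... < b_N, with exactly one zero in each of the N+1 intervals (-∞, a_1), (a_1, a_2), ..., (a_{N-1}, a_N), (a_N, +∞). -/
open Finset Filter Topology

/-- The function `f x = x - ∑ j, λ j / (x - a j)` with `a` strictly increasing and
`λ j > 0` has exactly `N + 1` real zeros, one in each of the intervals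
`(-∞, a 0), (a 0, a 1), …, (a (N-1), +∞)`. -/
theorem aomoto_forrester_one_dim_zeros
    (N : ℕ) (a : Fin N → ℝ) (ha : StrictMono a)
    (lam : Fin N → ℝ) (hlam : ∀ j, 0 < lam j)
    (f : ℝ → ℝ) (hf : ∀ x, f x = x - ∑ j, lam j / (x - a j)) :
    ∃ b : Fin (N + 1) → ℝ, StrictMono b ∧
      (∀ k, (∀ j, b k ≠ a j) ∧ f (b k) = 0) ∧
      (∀ k : Fin (N + 1), ∀ j : Fin N,
        ((j : ℕ) < (k : ℕ) → a j < b k) ∧ ((k : ℕ) ≤ (j : ℕ) → b k < a j)) ∧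
      (∀ x, (∀ j, x ≠ a j) → f x = 0 → ∃ k, x = b k) := by
  -- the open "intervals" between consecutive poles
  set S : Fin (N + 1) → Set ℝ := fun k =>
    {x | (∀ j : Fin N, (j : ℕ) < (k : ℕ) → a j < x) ∧
         (∀ j : Fin N, (k : ℕ) ≤ (j : ℕ) → x < a j)} with hSdef
  have hSne : ∀ k, ∀ x ∈ S k, ∀ j, x ≠ a j := by
    intro k x hx j
    rcases lt_or_ge (j : ℕ) (k : ℕ) with h | h
    · exact (hx.1 j h).ne'
    · exact (hx.2 j h).ne
  -- strict monotonicity on each interval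
  have hmono : ∀ k : Fin (N + 1), ∀ x ∈ S k, ∀ y ∈ S k, x < y → f x < f y := by
    intro k x hx y hy hxy
    have hsum : ∑ j, lam j / (y - a j) ≤ ∑ j, lam j / (x - a j) := by
      apply Finset.sum_le_sum
      intro j _
      rw [div_eq_mul_inv, div_eq_mul_inv]
      refine mul_le_mul_of_nonneg_left ?_ (hlam j).le
      rcases lt_or_ge (j : ℕ) (k : ℕ) with h | h
      · have h1 : 0 < x - a j := sub_pos.2 (hx.1 j h)
        have h2 : x - a j ≤ y - a j := by linarith
        have := one_div_le_one_div_of_le h1 h2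
        simpa [one_div] using this
      · have h1 : y - a j < 0 := sub_neg.2 (hy.2 j h)
        have h2 : x - a j ≤ y - a j := by linarith
        have := one_div_le_one_div_of_neg_of_le h1 h2
        simpa [one_div] using this
    rw [hf x, hf y]
    linarith
  -- continuity away from the poles
  have hcont : ∀ s : Set ℝ, (∀ x ∈ s, ∀ j, x ≠ a j) → ContinuousOn f s := by
    intro s hs
    have h1 : ContinuousOn (fun x : ℝ => x - ∑ j, lam j / (x - a j)) s := by
      refine ContinuousOn.sub continuousOn_id ?_
      refine continuousOn_finset_sum _ fun j _ => ?_
      exact ContinuousOn.div continuousOn_const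
        (continuousOn_id.sub continuousOn_const)
        (fun x hx => sub_ne_zero.2 (hs x hx j))
    exact h1.congr fun x _ => hf x
  -- behaviour at +∞
  have hsub_top : ∀ c : ℝ, Tendsto (fun x : ℝ => x - c) atTop atTop := by
    intro c
    exact (tendsto_atTop_add_const_right _ (-c) tendsto_id).congr
      fun x => (sub_eq_add_neg x c).symm
  have hterm : ∀ j : Fin N,
      Tendsto (fun x : ℝ => lam j / (x - a j)) atTop (𝓝 0) := by
    intro j
    have h2 := (hsub_top (a j)).inv_tendsto_atTop
    have := h2.const_mul (lam j)
    simpa [div_eq_mul_inv, Function.comp] using this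
  have hsum_top : Tendsto (fun x : ℝ => ∑ j, lam j / (x - a j)) atTop (𝓝 0) := by
    have := tendsto_finset_sum Finset.univ (fun j (_ : j ∈ Finset.univ) => hterm j)
    simpa using this
  have htop : Tendsto f atTop atTop := by
    have h1 : Tendsto (fun x : ℝ => x + -(∑ j, lam j / (x - a j))) atTop atTop :=
      Tendsto.atTop_add tendsto_id hsum_top.neg
    exact (h1.congr fun x => by rw [hf x]; ring).congr fun x => rfl
  -- behaviour at -∞
  have hterm_bot : ∀ j : Fin N,
      Tendsto (fun x : ℝ => lam j / (x - a j)) atBot (𝓝 0) := by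
    intro j
    have h1 : Tendsto (fun x : ℝ => a j - x) atBot atTop := by
      have h0 : Tendsto (fun x : ℝ => -x) atBot atTop := tendsto_neg_atBot_atTop
      exact (tendsto_atTop_add_const_right _ (a j) h0).congr fun x => by ring
    have h2 := h1.inv_tendsto_atTop
    have h3 := h2.const_mul (lam j)
    have h4 : Tendsto (fun x : ℝ => -(lam j * (fun x : ℝ => a j - x)⁻¹ x)) atBot (𝓝 0) := by
      simpa using h3.neg
    refine h4.congr fun x => ?_
    simp only [Pi.inv_apply]
    rw [show a j - x = -(x - a j) by ring, inv_neg, div_eq_mul_inv]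
    ring
  have hbot : Tendsto f atBot atBot := by
    have hsum_bot : Tendsto (fun x : ℝ => ∑ j, lam j / (x - a j)) atBot (𝓝 0) := by
      have := tendsto_finset_sum Finset.univ (fun j (_ : j ∈ Finset.univ) => hterm_bot j)
      simpa using this
    have h1 : Tendsto (fun x : ℝ => x + -(∑ j, lam j / (x - a j))) atBot atBot :=
      Tendsto.atBot_add tendsto_id hsum_bot.neg
    exact h1.congr fun x => by rw [hf x]; ring
  -- behaviour at each pole from the right: f → -∞
  have hRrest : ∀ j : Fin N, Tendsto
      (fun x : ℝ => x - ∑ i ∈ Finset.univ.erase j, lam i / (x - a i)) (𝓝 (a j))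
      (𝓝 (a j - ∑ i ∈ Finset.univ.erase j, lam i / (a j - a i))) := by
    intro j
    refine Tendsto.sub tendsto_id ?_
    refine tendsto_finset_sum _ fun i hi => ?_
    have hne : a j - a i ≠ 0 := by
      have : i ≠ j := (Finset.mem_erase.1 hi).1
      exact sub_ne_zero.2 fun h => this (ha.injective h.symm)
    exact Tendsto.div tendsto_const_nhds (tendsto_id.sub tendsto_const_nhds) hne
  have hsplit : ∀ (j : Fin N) (x : ℝ),
      f x = (x - ∑ i ∈ Finset.univ.erase j, lam i / (x - a i)) - lam j / (x - a j) := by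
    intro j x
    rw [hf x, ← Finset.add_sum_erase _ _ (Finset.mem_univ j)]
    ring
  have hR : ∀ j : Fin N, Tendsto f (𝓝[>] (a j)) atBot := by
    intro j
    have hsing : Tendsto (fun x : ℝ => lam j / (x - a j)) (𝓝[>] (a j)) atTop := by
      have h0 : Tendsto (fun x : ℝ => x - a j) (𝓝[>] (a j)) (𝓝[>] (0 : ℝ)) := by
        apply tendsto_nhdsWithin_of_tendsto_nhds_of_eventually_within
        · have : Tendsto (fun x : ℝ => x - a j) (𝓝 (a j)) (𝓝 (a j - a j)) :=
            tendsto_id.sub tendsto_const_nhds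
          simpa using this.mono_left nhdsWithin_le_nhds
        · filter_upwards [self_mem_nhdsWithin] with x hx
          exact sub_pos.2 (Set.mem_Ioi.1 hx)
      have h1 := tendsto_inv_nhdsGT_zero.comp h0
      have h2 := h1.const_mul_atTop (hlam j)
      exact h2.congr fun x => by rw [div_eq_mul_inv]; rfl
    have h3 : Tendsto
        (fun x : ℝ => (x - ∑ i ∈ Finset.univ.erase j, lam i / (x - a i)) +
          -(lam j / (x - a j))) (𝓝[>] (a j)) atBot :=
      Tendsto.add_atBot ((hRrest j).mono_left nhdsWithin_le_nhds)
        (tendsto_neg_atTop_atBot.comp hsing)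
    exact h3.congr fun x => by rw [hsplit j x]; ring
  -- behaviour at each pole from the left: f → +∞
  have hL : ∀ j : Fin N, Tendsto f (𝓝[<] (a j)) atTop := by
    intro j
    have hsing : Tendsto (fun x : ℝ => lam j / (a j - x)) (𝓝[<] (a j)) atTop := by
      have h0 : Tendsto (fun x : ℝ => a j - x) (𝓝[<] (a j)) (𝓝[>] (0 : ℝ)) := by
        apply tendsto_nhdsWithin_of_tendsto_nhds_of_eventually_within
        · have : Tendsto (fun x : ℝ => a j - x) (𝓝 (a j)) (𝓝 (a j - a j)) :=
            tendsto_const_nhds.sub tendsto_id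
          simpa using this.mono_left nhdsWithin_le_nhds
        · filter_upwards [self_mem_nhdsWithin] with x hx
          exact sub_pos.2 (Set.mem_Iio.1 hx)
      have h1 := tendsto_inv_nhdsGT_zero.comp h0
      have h2 := h1.const_mul_atTop (hlam j)
      exact h2.congr fun x => by rw [div_eq_mul_inv]; rfl
    have h3 : Tendsto
        (fun x : ℝ => (x - ∑ i ∈ Finset.univ.erase j, lam i / (x - a i)) +
          lam j / (a j - x)) (𝓝[<] (a j)) atTop :=
      Tendsto.add_atTop ((hRrest j).mono_left nhdsWithin_le_nhds) hsing
    refine h3.congr fun x => ?_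
    rw [hsplit j x, show a j - x = -(x - a j) by ring, div_neg]
    ring
  -- existence of a zero in each interval
  have hex : ∀ k : Fin (N + 1), ∃ x, x ∈ S k ∧ f x = 0 := by
    intro k
    have hneg : ∃ x, x ∈ S k ∧ f x < 0 := by
      rcases Nat.eq_zero_or_pos (k : ℕ) with hk | hk
      · -- leftmost interval: go to -∞
        have h1 : ∀ᶠ x in atBot, ∀ j : Fin N, x < a j := by
          rw [Filter.eventually_all]
          exact fun j => eventually_lt_atBot (a j)
        have h2 : ∀ᶠ x in atBot, f x < 0 := hbot.eventually (eventually_lt_atBot 0)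
        obtain ⟨x, hx1, hx2⟩ := (h1.and h2).exists
        exact ⟨x, ⟨fun j hj => by omega, fun j _ => hx1 j⟩, hx2⟩
      · have hkN : (k : ℕ) - 1 < N := by have := k.isLt; omega
        set j₀ : Fin N := ⟨(k : ℕ) - 1, hkN⟩ with hj₀
        have e1 : ∀ᶠ x in 𝓝[>] (a j₀), ∀ j : Fin N, (j : ℕ) < (k : ℕ) → a j < x := by
          filter_upwards [self_mem_nhdsWithin] with x hx j hj
          have : a j ≤ a j₀ := ha.monotone (by rw [Fin.le_def]; simp [hj₀]; omega)
          exact lt_of_le_of_lt this (Set.mem_Ioi.1 hx)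
        have e2 : ∀ᶠ x in 𝓝[>] (a j₀), ∀ j : Fin N, (k : ℕ) ≤ (j : ℕ) → x < a j := by
          rw [Filter.eventually_all]
          intro j
          by_cases h : (k : ℕ) ≤ (j : ℕ)
          · have hlt : a j₀ < a j := ha (by rw [Fin.lt_def]; simp [hj₀]; omega)
            have : Set.Iio (a j) ∈ 𝓝[>] (a j₀) := nhdsWithin_le_nhds (Iio_mem_nhds hlt)
            filter_upwards [this] with x hx _
            exact hx
          · filter_upwards with x hx
            exact absurd hx h
        have e3 : ∀ᶠ x in 𝓝[>] (a j₀), f x < 0 :=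
          (hR j₀).eventually (eventually_lt_atBot 0)
        obtain ⟨x, hx1, hx2, hx3⟩ := (e1.and (e2.and e3)).exists
        exact ⟨x, ⟨hx1, hx2⟩, hx3⟩
    have hpos : ∃ x, x ∈ S k ∧ 0 < f x := by
      rcases eq_or_lt_of_le (Nat.lt_succ_iff.1 k.isLt) with hk | hk
      · -- rightmost interval: go to +∞
        have h1 : ∀ᶠ x in atTop, ∀ j : Fin N, a j < x := by
          rw [Filter.eventually_all]
          exact fun j => eventually_gt_atTop (a j)
        have h2 : ∀ᶠ x in atTop, 0 < f x := htop.eventually (eventually_gt_atTop 0)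
        obtain ⟨x, hx1, hx2⟩ := (h1.and h2).exists
        refine ⟨x, ⟨fun j _ => hx1 j, fun j hj => by have := j.isLt; omega⟩, hx2⟩
      · set j₁ : Fin N := ⟨(k : ℕ), hk⟩ with hj₁
        have e1 : ∀ᶠ x in 𝓝[<] (a j₁), ∀ j : Fin N, (j : ℕ) < (k : ℕ) → a j < x := by
          rw [Filter.eventually_all]
          intro j
          by_cases h : (j : ℕ) < (k : ℕ)
          · have hlt : a j < a j₁ := ha (by rw [Fin.lt_def]; simp [hj₁]; omega)
            have : Set.Ioi (a j) ∈ 𝓝[<] (a j₁) := nhdsWithin_le_nhds (Ioi_mem_nhds hlt)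
            filter_upwards [this] with x hx _
            exact hx
          · filter_upwards with x hx
            exact absurd hx h
        have e2 : ∀ᶠ x in 𝓝[<] (a j₁), ∀ j : Fin N, (k : ℕ) ≤ (j : ℕ) → x < a j := by
          filter_upwards [self_mem_nhdsWithin] with x hx j hj
          have : a j₁ ≤ a j := ha.monotone (by rw [Fin.le_def]; simp [hj₁]; omega)
          exact lt_of_lt_of_le (Set.mem_Iio.1 hx) this
        have e3 : ∀ᶠ x in 𝓝[<] (a j₁), 0 < f x :=
          (hL j₁).eventually (eventually_gt_atTop 0)
        obtain ⟨x, hx1, hx2, hx3⟩ := (e1.and (e2.and e3)).exists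
        exact ⟨x, ⟨hx1, hx2⟩, hx3⟩
    obtain ⟨x₁, hx₁S, hx₁⟩ := hneg
    obtain ⟨x₂, hx₂S, hx₂⟩ := hpos
    have hlt : x₁ < x₂ := by
      by_contra h
      push_neg at h
      rcases eq_or_lt_of_le h with rfl | h'
      · linarith
      · exact absurd (hmono k x₂ hx₂S x₁ hx₁S h') (by linarith)
    have hsub : Set.Icc x₁ x₂ ⊆ S k := by
      intro x hx
      exact ⟨fun j hj => lt_of_lt_of_le (hx₁S.1 j hj) hx.1,
             fun j hj => lt_of_le_of_lt hx.2 (hx₂S.2 j hj)⟩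
    have hc : ContinuousOn f (Set.Icc x₁ x₂) :=
      hcont _ fun x hx j => hSne k x (hsub hx) j
    have h0 : (0 : ℝ) ∈ Set.Icc (f x₁) (f x₂) := ⟨hx₁.le, hx₂.le⟩
    obtain ⟨c, hcmem, hfc⟩ := intermediate_value_Icc hlt.le hc h0
    exact ⟨c, hsub hcmem, hfc⟩
  choose b hbS hb0 using hex
  have hbival : ∀ k : Fin (N + 1), ∀ j : Fin N,
      ((j : ℕ) < (k : ℕ) → a j < b k) ∧ ((k : ℕ) ≤ (j : ℕ) → b k < a j) :=
    fun k j => ⟨fun h => (hbS k).1 j h, fun h => (hbS k).2 j h⟩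
  have huniq : ∀ k, ∀ y ∈ S k, f y = 0 → y = b k := by
    intro k y hyS hy0
    rcases lt_trichotomy y (b k) with h | h | h
    · have := hmono k y hyS (b k) (hbS k) h
      rw [hy0, hb0 k] at this
      exact absurd this (lt_irrefl 0)
    · exact h
    · have := hmono k (b k) (hbS k) y hyS h
      rw [hy0, hb0 k] at this
      exact absurd this (lt_irrefl 0)
  refine ⟨b, ?_, fun k => ⟨hSne k (b k) (hbS k), hb0 k⟩, hbival, ?_⟩
  · intro k l hkl
    have hkl' : (k : ℕ) < (l : ℕ) := hkl
    have hkN : (k : ℕ) < N := lt_of_lt_of_le hkl' (Nat.lt_succ_iff.1 l.isLt)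
    set j : Fin N := ⟨(k : ℕ), hkN⟩ with hj
    have h1 : b k < a j := (hbS k).2 j (by simp [hj])
    have h2 : a j < b l := (hbS l).1 j (by simp [hj]; omega)
    exact h1.trans h2
  · intro x hxne hx0
    classical
    set T : Finset (Fin N) := Finset.univ.filter (fun j => a j < x) with hT
    by_cases hne : T.Nonempty
    · set j₀ := T.max' hne with hj₀
      have hj₀mem : a j₀ < x := (Finset.mem_filter.1 (T.max'_mem hne)).2
      have hkval : (j₀ : ℕ) + 1 < N + 1 := by have := j₀.isLt; omega
      refine ⟨⟨(j₀ : ℕ) + 1, hkval⟩, ?_⟩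
      have hxS : x ∈ S ⟨(j₀ : ℕ) + 1, hkval⟩ := by
        constructor
        · intro j hj
          simp only at hj
          have : a j ≤ a j₀ := ha.monotone (by rw [Fin.le_def]; omega)
          exact lt_of_le_of_lt this hj₀mem
        · intro j hj
          simp only at hj
          have hnotin : j ∉ T := by
            intro hmem
            have := Finset.le_max' T j hmem
            rw [← hj₀, Fin.le_def] at this
            omega
          have h1 : ¬ a j < x := fun h => hnotin (Finset.mem_filter.2 ⟨Finset.mem_univ _, h⟩)
          exact lt_of_le_of_ne (not_lt.1 h1) (hxne j)
      exact huniq _ x hxS hx0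
    · refine ⟨⟨0, by omega⟩, ?_⟩
      have hxS : x ∈ S ⟨0, by omega⟩ := by
        constructor
        · intro j hj
          simp only at hj
          omega
        · intro j _
          have h1 : j ∉ T := fun h => hne ⟨j, h⟩
          have h2 : ¬ a j < x := fun h => h1 (Finset.mem_filter.2 ⟨Finset.mem_univ _, h⟩)
          exact lt_of_le_of_ne (not_lt.1 h2) (hxne j)
      exact huniq _ x hxS hx0
end

section
/- Let f be holomorphic in a neighborhood of b ∈ ℂ with f(b) = 0 and f'(b) ≠ 0. Then the local inverse x(w) of w = f(x) near w = 0 satisfying x(0) = b has Taylor expansion x(w) = b + Σ_{i≥1} g_i(b) wⁱ/i!, where g_i(z) = (d/dz)^{i-1} [ ((z-b)/f(z))^i ]. -/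
/-!
Put `a m = h⁽ᵐ⁾(0) / m!`. Since `h (f z) = z` near `b`, Taylor's theorem for `h` at `0` shows
that `R z = z - ∑_{m ≤ n} a m * f z ^ m` vanishes to order `n + 1` at `b`, so `u ^ n * R'`
vanishes to order `n`:
`(d/dz)^(n-1) (u ^ n) = ∑_{m ≤ n} a m * (d/dz)^(n-1) (u ^ n * (f ^ m)')` at `b`.
Since `u ^ n = (z - b) ^ n / f ^ n`, the `m`-th derivative on the right is `(n-1)!` times the
residue of `(f ^ m)' / f ^ n` at `b`, which is `n` for `m = n` and `0` for `m < n`, where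
`(f ^ m)' / f ^ n = m / (m - n) * (f ^ (m - n))'`.
Without Laurent series the vanishing comes from
`k * u ^ (k+1) * f' = k * u ^ k - (z - b) * (u ^ k)'` (differentiate `u * f = z - b`) and from
the fact that `(z - b) * d/dz` multiplies the `k`-th Taylor coefficient at `b` by `k`.
-/

open Filter
open scoped Topology Nat

section IteratedDerivAt

variable {𝕜 : Type*} [NontriviallyNormedField 𝕜] {b : 𝕜}

theorem iteratedDeriv_sub_pow_mul {G : 𝕜 → 𝕜} {n : ℕ} (j : ℕ) (hG : ContDiffAt 𝕜 n G b) :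
    iteratedDeriv n (fun z => (z - b) ^ j * G z) b
      = n.descFactorial j * iteratedDeriv (n - j) G b := by
  have hpow (i : ℕ) :
      iteratedDeriv i (fun z => (z - b) ^ j) b = if i = j then (j ! : 𝕜) else 0 := by
    rw [congrFun (iteratedDeriv_comp_sub_const i (· ^ j) b) b, sub_self,
      iteratedDeriv_fun_pow_zero, Nat.cast_ite, Nat.cast_zero]
  rw [iteratedDeriv_fun_mul (by fun_prop) hG]
  simp only [hpow, mul_ite, ite_mul, mul_zero, zero_mul, Finset.sum_ite_eq', Finset.mem_range]
  split_ifs with hj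
  · rw [Nat.descFactorial_eq_factorial_mul_choose]
    push_cast
    ring
  · simp [Nat.descFactorial_eq_zero_iff_lt.2 (by omega : n < j)]

variable [CompleteSpace 𝕜]

theorem iteratedDeriv_sub_mul_deriv {F : 𝕜 → 𝕜} (hF : AnalyticAt 𝕜 F b) (n : ℕ) :
    iteratedDeriv n (fun z => (z - b) * deriv F z) b = n * iteratedDeriv n F b := by
  have hshift := iteratedDeriv_sub_pow_mul (n := n) 1 hF.deriv.contDiffAt
  simp only [pow_one] at hshift
  rw [hshift, Nat.descFactorial_one]
  cases n with
  | zero => simp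
  | succ n => rw [Nat.add_sub_cancel, ← iteratedDeriv_succ']

theorem iteratedDeriv_mul_deriv_eq_zero_of_le_analyticOrderAt [CharZero 𝕜] {R G : 𝕜 → 𝕜}
    {n i : ℕ} (hR : AnalyticAt 𝕜 R b) (hG : AnalyticAt 𝕜 G b)
    (hord : ((n + 1 : ℕ) : ℕ∞) ≤ analyticOrderAt R b) (hi : i < n) :
    iteratedDeriv i (fun z => G z * deriv R z) b = 0 := by
  have hRb : R b = 0 :=
    apply_eq_zero_of_analyticOrderAt_ne_zero (ne_bot_of_le_ne_bot (by simp) hord)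
  have hR' : (n : ℕ∞) ≤ analyticOrderAt (deriv R) b :=
    (analyticOrderAt_deriv_ge_iff hR hRb).2 (by exact_mod_cast hord)
  have hGR' : (n : ℕ∞) ≤ analyticOrderAt (fun z => G z * deriv R z) b := by
    rw [← Pi.mul_def, analyticOrderAt_mul hG hR.deriv]
    exact hR'.trans le_add_self
  exact (natCast_le_analyticOrderAt_iff_iteratedDeriv_eq_zero (hG.mul hR.deriv)).1 hGR' i hi

end IteratedDerivAt

section Residue

variable {𝕜 : Type*} [NontriviallyNormedField 𝕜] [CompleteSpace 𝕜] {b : 𝕜} {f u : 𝕜 → 𝕜}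

theorem eventually_deriv_mul_add_mul_deriv_eq_one (hf : AnalyticAt 𝕜 f b)
    (hu : AnalyticAt 𝕜 u b) (huf : ∀ᶠ z in 𝓝 b, u z * f z = z - b) :
    ∀ᶠ z in 𝓝 b, deriv u z * f z + u z * deriv f z = 1 := by
  filter_upwards [huf.eventually_nhds, hf.eventually_analyticAt, hu.eventually_analyticAt]
    with z hz hfz huz
  have : deriv (fun z => u z * f z) z = deriv (fun z => z - b) z := EventuallyEq.deriv_eq hz
  rwa [deriv_fun_mul huz.differentiableAt hfz.differentiableAt, deriv_sub_const, deriv_id''] at this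

theorem natCast_mul_pow_succ_mul_deriv_eventuallyEq (hf : AnalyticAt 𝕜 f b)
    (hu : AnalyticAt 𝕜 u b) (huf : ∀ᶠ z in 𝓝 b, u z * f z = z - b) (k : ℕ) :
    (fun z => k * (u z ^ (k + 1) * deriv f z))
      =ᶠ[𝓝 b] fun z => k * u z ^ k - (z - b) * deriv (fun z => u z ^ k) z := by
  filter_upwards [eventually_deriv_mul_add_mul_deriv_eq_one hf hu huf, huf,
    hu.eventually_analyticAt] with z hderiv hz huz
  rw [deriv_fun_pow huz.differentiableAt]
  cases k with
  | zero => simp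
  | succ k =>
    push_cast
    linear_combination ((k : 𝕜) + 1) * u z ^ (k + 1) * hderiv
      - ((k : 𝕜) + 1) * u z ^ k * deriv u z * hz

theorem iteratedDeriv_pow_succ_mul_deriv [CharZero 𝕜] (hf : AnalyticAt 𝕜 f b)
    (hu : AnalyticAt 𝕜 u b) (huf : ∀ᶠ z in 𝓝 b, u z * f z = z - b) (hfb : f b = 0) (k : ℕ) :
    iteratedDeriv k (fun z => u z ^ (k + 1) * deriv f z) b = if k = 0 then 1 else 0 := by
  split_ifs with hk
  · subst hk
    simpa [hfb] using (eventually_deriv_mul_add_mul_deriv_eq_one hf hu huf).self_of_nhds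
  · have hderiv_pow := (hu.fun_pow k).deriv
    have hA : AnalyticAt 𝕜 (fun z => k * u z ^ k) b := by fun_prop
    have hB : AnalyticAt 𝕜 (fun z => (z - b) * deriv (fun z => u z ^ k) z) b := by fun_prop
    have hscaled := (natCast_mul_pow_succ_mul_deriv_eventuallyEq hf hu huf k).iteratedDeriv_eq k
    rw [iteratedDeriv_const_mul_field, iteratedDeriv_fun_sub hA.contDiffAt hB.contDiffAt,
      iteratedDeriv_const_mul_field, iteratedDeriv_sub_mul_deriv (hu.fun_pow k),
      sub_self] at hscaled
    exact (mul_eq_zero.1 hscaled).resolve_left (by exact_mod_cast hk)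

theorem iteratedDeriv_pow_mul_deriv_pow [CharZero 𝕜] (hf : AnalyticAt 𝕜 f b)
    (hu : AnalyticAt 𝕜 u b) (huf : ∀ᶠ z in 𝓝 b, u z * f z = z - b) (hfb : f b = 0)
    {m n : ℕ} (hn : 0 < n) (hmn : m ≤ n) :
    iteratedDeriv (n - 1) (fun z => u z ^ n * deriv (fun z => f z ^ m) z) b
      = if m = n then (n ! : 𝕜) else 0 := by
  rcases m with _ | j
  · simp [hn.ne]
  obtain ⟨k, rfl⟩ : ∃ k, n = j + 1 + k := ⟨n - (j + 1), by omega⟩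
  have hfactor : (fun z => u z ^ (j + 1 + k) * deriv (fun z => f z ^ (j + 1)) z) =ᶠ[𝓝 b]
      fun z => (j + 1 : 𝕜) * ((z - b) ^ j * (u z ^ (k + 1) * deriv f z)) := by
    filter_upwards [huf, hf.eventually_analyticAt] with z hz hfz
    rw [deriv_fun_pow hfz.differentiableAt, ← hz]
    push_cast
    ring
  have hderiv_f := hf.deriv
  have hA : AnalyticAt 𝕜 (fun z => u z ^ (k + 1) * deriv f z) b := by fun_prop
  rw [hfactor.iteratedDeriv_eq, iteratedDeriv_const_mul_field,
    iteratedDeriv_sub_pow_mul _ hA.contDiffAt, show j + 1 + k - 1 - j = k by omega,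
    iteratedDeriv_pow_succ_mul_deriv hf hu huf hfb]
  rcases k with _ | k
  · simp [Nat.descFactorial_self, Nat.factorial_succ]
  · simp

theorem iteratedDeriv_pow_mul_deriv_sum_pow [CharZero 𝕜] (hf : AnalyticAt 𝕜 f b)
    (hu : AnalyticAt 𝕜 u b) (huf : ∀ᶠ z in 𝓝 b, u z * f z = z - b) (hfb : f b = 0)
    {n : ℕ} (hn : 0 < n) (c : ℕ → 𝕜) :
    iteratedDeriv (n - 1)
        (fun z => u z ^ n * deriv (fun z => ∑ i ∈ Finset.range (n + 1), c i * f z ^ i) z) b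
      = n ! * c n := by
  have hsum : (fun z => u z ^ n * deriv (fun z => ∑ i ∈ Finset.range (n + 1), c i * f z ^ i) z)
      =ᶠ[𝓝 b] fun z => ∑ i ∈ Finset.range (n + 1),
        c i * (u z ^ n * deriv (fun z => f z ^ i) z) := by
    filter_upwards [hf.eventually_analyticAt] with z hfz
    rw [deriv_fun_sum fun i _ => by fun_prop, Finset.mul_sum]
    refine Finset.sum_congr rfl fun i _ => ?_
    rw [deriv_const_mul _ (by fun_prop)]
    ring
  have hA (i : ℕ) : AnalyticAt 𝕜 (fun z => c i * (u z ^ n * deriv (fun z => f z ^ i) z)) b := by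
    have hderiv_pow := (hf.fun_pow i).deriv
    fun_prop
  rw [hsum.iteratedDeriv_eq, iteratedDeriv_fun_sum fun i _ => (hA i).contDiffAt]
  simp only [iteratedDeriv_const_mul_field]
  rw [Finset.sum_congr rfl fun i hi => by
    rw [iteratedDeriv_pow_mul_deriv_pow hf hu huf hfb hn
      (Nat.lt_succ_iff.1 (Finset.mem_range.1 hi))]]
  simp [mul_comm]

end Residue

theorem HasStrictDerivAt.eventually_left_inverse_of_right_inverse {𝕜 : Type*}
    [NontriviallyNormedField 𝕜] [CompleteSpace 𝕜] {f g : 𝕜 → 𝕜} {f' a : 𝕜}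
    (hf : HasStrictDerivAt f f' a) (hf' : f' ≠ 0) (hg : ∀ᶠ y in 𝓝 (f a), f (g y) = y)
    (hg_tendsto : Tendsto g (𝓝 (f a)) (𝓝 a)) :
    ∀ᶠ x in 𝓝 a, g (f x) = x := by
  have hleft := hf.eventually_left_inverse hf'
  have hg_eq : HasStrictDerivAt.localInverse f f' a hf hf' =ᶠ[𝓝 (f a)] g :=
    eventuallyEq_of_left_inv_of_right_inv hleft hg hg_tendsto
  filter_upwards [hleft, hf.hasDerivAt.continuousAt.tendsto.eventually hg_eq] with x hx hgx
  rw [← hgx, hx]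

theorem eventually_mul_eq_sub_of_eventually_eq_div {𝕜 : Type*} [Field 𝕜] [TopologicalSpace 𝕜]
    {f g u : 𝕜 → 𝕜} {b : 𝕜} (hleft : ∀ᶠ z in 𝓝 b, g (f z) = z) (hfb : f b = 0)
    (hu : ∀ᶠ z in 𝓝[≠] b, u z = (z - b) / f z) :
    ∀ᶠ z in 𝓝 b, u z * f z = z - b := by
  rw [← nhdsNE_sup_pure, eventually_sup, eventually_pure, hfb, mul_zero, sub_self]
  refine ⟨?_, rfl⟩
  filter_upwards [hu, hleft.filter_mono nhdsWithin_le_nhds, self_mem_nhdsWithin] with z huz hgz hz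
  have hfz : f z ≠ 0 := fun hfz => hz (by rw [← hgz, hfz, ← hfb, hleft.self_of_nhds]; rfl)
  rw [huz, div_mul_cancel₀ _ hfz]

theorem natCast_le_analyticOrderAt_sub_sum_comp {𝕜 : Type*} [NontriviallyNormedField 𝕜]
    [CompleteSpace 𝕜] [CharZero 𝕜] {f h : 𝕜 → 𝕜} {b : 𝕜} (hf : AnalyticAt 𝕜 f b)
    (hfb : f b = 0) (hfb' : deriv f b ≠ 0) (hh : AnalyticAt 𝕜 h 0)
    (hleft : ∀ᶠ z in 𝓝 b, h (f z) = z) (n : ℕ) :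
    ((n + 1 : ℕ) : ℕ∞) ≤ analyticOrderAt
      (fun z => z - ∑ i ∈ Finset.range (n + 1), iteratedDeriv i h 0 / i ! * f z ^ i) b := by
  obtain ⟨F, hF, hhF⟩ := hh.exists_eventuallyEq_sum_add_pow_mul (n + 1)
  -- `z = h (f z)`, so the function is the Taylor remainder of `h` evaluated at `f z`
  have hremainder : (fun z => z - ∑ i ∈ Finset.range (n + 1), iteratedDeriv i h 0 / i ! * f z ^ i)
      =ᶠ[𝓝 b] (fun w => w ^ (n + 1) * F w) ∘ f := by
    have hf0 : Tendsto f (𝓝 b) (𝓝 0) := hfb ▸ hf.continuousAt.tendsto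
    filter_upwards [hleft, hf0.eventually hhF] with z hz hhz
    have hsub := sub_eq_iff_eq_add'.2 hhz
    rw [hz, smul_eq_mul] at hsub
    rw [Function.comp_apply, ← hsub]
    congr 1
    exact Finset.sum_congr rfl fun i _ => by rw [smul_eq_mul]; ring
  rw [analyticOrderAt_congr hremainder, analyticOrderAt_comp_of_deriv_ne_zero hf hfb', hfb]
  exact (natCast_le_analyticOrderAt (by fun_prop)).2 ⟨F, hF, by simp⟩

/-- **Lagrange inversion formula.**  If `f` is holomorphic near `b` with a simple zero at
`b`, `u` is the holomorphic extension of `z ↦ (z - b) / f z` near `b`, and `h` is the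
local inverse of `f` near `0` with `h 0 = b`, then the Taylor expansion of `h` at `0` is
`h w = b + ∑_{i ≥ 1} g_i(b) wⁱ / i!` with `g_i(b) = (d/dz)^{i-1} [((z-b)/f z)^i]` at
`z = b`; equivalently the `i`-th derivative of `h` at `0` equals
`(d/dz)^{i-1} [(u z)^i]` at `z = b`. -/
theorem lagrange_inversion
    (f : ℂ → ℂ) (b : ℂ) (hf : AnalyticAt ℂ f b) (hfb : f b = 0) (hfb' : deriv f b ≠ 0)
    (u : ℂ → ℂ) (hu : AnalyticAt ℂ u b)
    (huf : ∀ᶠ z in nhdsWithin b {b}ᶜ, u z = (z - b) / f z)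
    (h : ℂ → ℂ) (hh : AnalyticAt ℂ h 0) (hh0 : h 0 = b)
    (hinv : ∀ᶠ w in nhds 0, f (h w) = w) :
    ∀ i : ℕ, 1 ≤ i →
      iteratedDeriv i h 0 = iteratedDeriv (i - 1) (fun z => u z ^ i) b := by
  intro n hn
  have hleft : ∀ᶠ z in 𝓝 b, h (f z) = z :=
    hf.hasStrictDerivAt.eventually_left_inverse_of_right_inverse hfb' (by rwa [hfb])
      (by rw [hfb, ← hh0]; exact hh.continuousAt.tendsto)
  have huf' := eventually_mul_eq_sub_of_eventually_eq_div hleft hfb huf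
  set S : ℂ → ℂ := fun z => ∑ i ∈ Finset.range (n + 1), iteratedDeriv i h 0 / i ! * f z ^ i
  have hS : AnalyticAt ℂ S b := by fun_prop
  have hord := natCast_le_analyticOrderAt_sub_sum_comp hf hfb hfb' hh hleft n
  have hzero : iteratedDeriv (n - 1) (fun z => u z ^ n * deriv (fun z => z - S z) z) b = 0 :=
    iteratedDeriv_mul_deriv_eq_zero_of_le_analyticOrderAt (by fun_prop) (hu.fun_pow n) hord
      (by omega)
  have hderiv : (fun z => u z ^ n * deriv (fun z => z - S z) z)
      =ᶠ[𝓝 b] fun z => u z ^ n - u z ^ n * deriv S z := by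
    filter_upwards [hS.eventually_analyticAt] with z hSz
    rw [deriv_fun_sub differentiableAt_fun_id hSz.differentiableAt, deriv_id'']
    ring
  rw [hderiv.iteratedDeriv_eq, iteratedDeriv_fun_sub (hu.fun_pow n).contDiffAt
      ((hu.fun_pow n).fun_mul hS.deriv).contDiffAt,
    iteratedDeriv_pow_mul_deriv_sum_pow hf hu huf' hfb (by omega), sub_eq_zero] at hzero
  rw [hzero, mul_div_cancel₀ _ (by exact_mod_cast n.factorial_ne_zero)]
end

section
/- Let P be a polynomial, and work in formal power series in t. Define F_t(z) = z - t∇P(z). Suppose Q_t(z) = Σ_{m≥0} t^m Q^{[m]}(z) is a family of smooth functions solving the Hamilton–Jacobi equation ∂Q_t/∂t = (1/2)⟨∇Q_t, ∇Q_t⟩ with Q_0 = P. Then G_t(z) = z + t∇Q_t(z) is the (formal in t) inverse of F_t: G_t(F_t(z)) = z and F_t(G_t(z)) = z as identities of formal power series in t. -/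
open RealInnerProductSpace
set_option maxHeartbeats 1000000


lemma zhao_gronwall_zero {E : Type*} [NormedAddCommGroup E] [NormedSpace ℝ E]
    {f f' : ℝ → E} {N : ℝ → ℝ} (hd : ∀ t, HasDerivAt f (f' t) t)
    (hN : Continuous N) (hb : ∀ t, ‖f' t‖ ≤ N t * ‖f t‖) (h0 : f 0 = 0) :
    ∀ t, f t = 0 := by
  have main : ∀ {F F' : ℝ → E} {M : ℝ → ℝ}, (∀ t, HasDerivAt F (F' t) t) → Continuous M →
      (∀ t, ‖F' t‖ ≤ M t * ‖F t‖) → F 0 = 0 → ∀ t, 0 ≤ t → F t = 0 := by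
    intro F F' M hd hM hb h0 t ht
    obtain ⟨m, hm, hmax⟩ := isCompact_Icc.exists_isMaxOn (α := ℝ) (s := Set.Icc (0:ℝ) t)
      (Set.nonempty_Icc.2 ht) hM.continuousOn
    set K := max (M m) 0 with hK
    have hKs : ∀ s ∈ Set.Icc (0:ℝ) t, M s ≤ K := fun s hs => le_trans (hmax hs) (le_max_left _ _)
    have := norm_le_gronwallBound_of_norm_deriv_right_le (f := F) (f' := F') (δ := 0) (K := K)
      (ε := 0) (a := 0) (b := t)
      (fun s _ => (hd s).continuousAt.continuousWithinAt)
      (fun s _ => (hd s).hasDerivWithinAt)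
      (by simp [h0])
      (fun s hs => by
        have h1 := hb s
        have h2 : M s * ‖F s‖ ≤ K * ‖F s‖ :=
          mul_le_mul_of_nonneg_right (hKs s (Set.Ico_subset_Icc_self hs)) (norm_nonneg _)
        simpa using h1.trans h2)
    have := this t (Set.right_mem_Icc.2 ht)
    rw [gronwallBound_ε0_δ0] at this
    exact norm_le_zero_iff.1 this
  intro t
  rcases le_total 0 t with ht | ht
  · exact main hd hN hb h0 t ht
  · have hrev : ∀ s : ℝ, HasDerivAt (fun s => f (-s)) ((-1 : ℝ) • f' (-s)) s := fun s =>
      (hd (-s)).scomp s (hasDerivAt_neg s)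
    have := main (F := fun s => f (-s)) (F' := fun s => (-1 : ℝ) • f' (-s))
      (M := fun s => N (-s)) hrev (hN.comp continuous_neg)
      (fun s => by simpa using hb (-s)) (by simpa using h0) (-t) (by linarith)
    simpa using this

noncomputable def zhaoLam (n : ℕ) : ((ℝ × EuclideanSpace ℝ (Fin n)) →L[ℝ] ℝ) →L[ℝ] EuclideanSpace ℝ (Fin n) :=
  ((InnerProductSpace.toDual ℝ (EuclideanSpace ℝ (Fin n))).symm.toContinuousLinearEquiv.toContinuousLinearMap).comp
    ((ContinuousLinearMap.compL ℝ (EuclideanSpace ℝ (Fin n)) (ℝ × EuclideanSpace ℝ (Fin n)) ℝ).flip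
      (ContinuousLinearMap.inr ℝ ℝ (EuclideanSpace ℝ (Fin n))))

lemma zhaoLam_inner {n : ℕ} (ℓ : (ℝ × EuclideanSpace ℝ (Fin n)) →L[ℝ] ℝ) (v : EuclideanSpace ℝ (Fin n)) :
    ⟪zhaoLam n ℓ, v⟫ = ℓ (0, v) := by
  simp [zhaoLam, InnerProductSpace.toDual_symm_apply]

section Core
variable {n : ℕ} {q : ℝ × EuclideanSpace ℝ (Fin n) → ℝ}
local notation "E" => EuclideanSpace ℝ (Fin n)

/-- Core characteristics lemma: the "velocity field" `u = ∇_z q` is constant along the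
straight characteristics `t ↦ (t, x - t • u(0,x))`. -/
lemma zhao_core (hq : ContDiff ℝ (⊤ : ℕ∞) q)
    (hHJ : ∀ y : ℝ × E, fderiv ℝ q y (1, 0) =
      (1 / 2) * ⟪zhaoLam n (fderiv ℝ q y), zhaoLam n (fderiv ℝ q y)⟫) :
    ∀ (x : E) (t : ℝ),
      zhaoLam n (fderiv ℝ q (t, x - t • zhaoLam n (fderiv ℝ q (0, x)))) =
      zhaoLam n (fderiv ℝ q (0, x)) := by
  have hqd : Differentiable ℝ q := hq.differentiable (by simp)
  set g : ℝ × E → ((ℝ × E) →L[ℝ] ℝ) := fderiv ℝ q with hg_def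
  have hg : ContDiff ℝ (⊤ : ℕ∞) g := hq.fderiv_right (by simp)
  have hgd : Differentiable ℝ g := hg.differentiable (by simp)
  set u : ℝ × E → E := fun y => zhaoLam n (g y) with hu_def
  have hu : ContDiff ℝ (⊤ : ℕ∞) u := (zhaoLam n).contDiff.comp hg
  have hud : ∀ y, HasFDerivAt u ((zhaoLam n).comp (fderiv ℝ g y)) y := fun y =>
    (zhaoLam n).hasFDerivAt.comp y (hgd y).hasFDerivAt
  have hufd : ∀ y, fderiv ℝ u y = (zhaoLam n).comp (fderiv ℝ g y) := fun y => (hud y).fderiv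
  -- symmetry of the second derivative of q
  have symm2 : ∀ y a b, fderiv ℝ g y a b = fderiv ℝ g y b a := fun y a b =>
    second_derivative_symmetric (fun p => (hqd p).hasFDerivAt) (hgd y).hasFDerivAt a b
  -- derivative of `y ↦ g y w` in direction `a` is `fderiv g y a w`
  have evalD : ∀ (y : ℝ × E) (w : ℝ × E), HasFDerivAt (fun y' => g y' w)
      ((ContinuousLinearMap.apply ℝ ℝ w).comp (fderiv ℝ g y)) y := fun y w =>
    (ContinuousLinearMap.apply ℝ ℝ w).hasFDerivAt.comp y (hgd y).hasFDerivAt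
  -- fact B : ∀ y v p, fderiv ℝ g y (0, v) (0, p) = ⟪fderiv ℝ u y (0, v), p⟫
  have factB : ∀ (y : ℝ × E) (v p : E), fderiv ℝ g y (0, v) (0, p) = ⟪fderiv ℝ u y (0, v), p⟫ := by
    intro y v p
    have hfun : (fun y' => g y' ((0 : ℝ), p)) = fun y' => ⟪u y', p⟫ :=
      funext fun y' => (zhaoLam_inner (g y') p).symm
    have h1 : HasFDerivAt (fun y' => g y' ((0 : ℝ), p))
        ((ContinuousLinearMap.apply ℝ ℝ ((0 : ℝ), p)).comp (fderiv ℝ g y)) y := evalD y (0, p)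
    have h2 : HasFDerivAt (fun y' => ⟪u y', p⟫)
        ((fderivInnerCLM ℝ (u y, p)).comp <| ((zhaoLam n).comp (fderiv ℝ g y)).prod 0) y :=
      HasFDerivAt.inner ℝ (hud y) (hasFDerivAt_const p y)
    rw [hfun] at h1
    have h3 := h1.unique h2
    have h4 := congrFun (congrArg (fun (L : (ℝ × E) →L[ℝ] ℝ) => (L : ℝ × E → ℝ)) h3) (0, v)
    simp only [ContinuousLinearMap.comp_apply, ContinuousLinearMap.apply_apply,
      ContinuousLinearMap.prod_apply, ContinuousLinearMap.zero_apply,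
      fderivInnerCLM_apply, inner_zero_right] at h4
    rw [hufd y]
    simpa using h4
  -- fact A : ∀ y v, fderiv ℝ g y (0, v) (1, 0) = ⟪fderiv ℝ u y (0, v), u y⟫
  have factA : ∀ (y : ℝ × E) (v : E), fderiv ℝ g y (0, v) (1, 0) = ⟪fderiv ℝ u y (0, v), u y⟫ := by
    intro y v
    have hfun : (fun y' => g y' ((1 : ℝ), (0 : E))) = fun y' => (1 / 2 : ℝ) * ⟪u y', u y'⟫ :=
      funext fun y' => hHJ y'
    have h1 : HasFDerivAt (fun y' => g y' ((1 : ℝ), (0 : E)))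
        ((ContinuousLinearMap.apply ℝ ℝ ((1 : ℝ), (0 : E))).comp (fderiv ℝ g y)) y := evalD y (1, 0)
    have h2 : HasFDerivAt (fun y' => (1 / 2 : ℝ) * ⟪u y', u y'⟫)
        ((1 / 2 : ℝ) • ((fderivInnerCLM ℝ (u y, u y)).comp <|
          ((zhaoLam n).comp (fderiv ℝ g y)).prod ((zhaoLam n).comp (fderiv ℝ g y)))) y :=
      (HasFDerivAt.inner ℝ (hud y) (hud y)).const_mul (1 / 2 : ℝ)
    rw [hfun] at h1
    have h3 := h1.unique h2
    have h4 := congrFun (congrArg (fun (L : (ℝ × E) →L[ℝ] ℝ) => (L : ℝ × E → ℝ)) h3) (0, v)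
    simp only [ContinuousLinearMap.comp_apply, ContinuousLinearMap.apply_apply,
      ContinuousLinearMap.prod_apply, ContinuousLinearMap.smul_apply,
      fderivInnerCLM_apply, smul_eq_mul] at h4
    rw [hufd y, h4]
    simp only [ContinuousLinearMap.comp_apply, real_inner_comm (u y)]
    ring
  -- now the characteristics argument
  intro x t
  show u (t, x - t • u (0, x)) = u (0, x)
  set p : E := u (0, x) with hp_def
  set c : ℝ → ℝ × E := fun s => (s, x - s • p) with hc_def
  have hud' : ∀ y, HasFDerivAt u (fderiv ℝ u y) y := fun y =>
    (hu.differentiable (by simp) y).hasFDerivAt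
  set w : ℝ → E := fun s => u (c s) - p with hw_def
  have hc : ∀ s, HasDerivAt c ((1 : ℝ), -p) s := by
    intro s
    have h1 : HasDerivAt (fun s : ℝ => x - s • p) (-p) s := by
      simpa using ((hasDerivAt_id s).smul_const p).const_sub x
    exact (hasDerivAt_id s).prodMk h1
  have hw : ∀ s, HasDerivAt w (fderiv ℝ u (c s) (1, -p)) s := fun s =>
    ((hud' (c s)).comp_hasDerivAt s (hc s)).sub_const p
  have hw_inner : ∀ (s : ℝ) (v : E),
      ⟪fderiv ℝ u (c s) (1, -p), v⟫ = ⟪fderiv ℝ u (c s) (0, v), w s⟫ := by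
    intro s v
    calc ⟪fderiv ℝ u (c s) (1, -p), v⟫
        = fderiv ℝ g (c s) (1, -p) (0, v) := by
          rw [hufd (c s)]; simp only [ContinuousLinearMap.comp_apply]
          exact zhaoLam_inner _ _
      _ = fderiv ℝ g (c s) (0, v) (1, -p) := symm2 _ _ _
      _ = fderiv ℝ g (c s) (0, v) ((1 : ℝ), (0 : E)) - fderiv ℝ g (c s) (0, v) ((0 : ℝ), p) := by
          rw [show ((1 : ℝ), -p) = ((1 : ℝ), (0 : E)) - ((0 : ℝ), p) by
            simp [Prod.ext_iff], map_sub]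
      _ = ⟪fderiv ℝ u (c s) (0, v), u (c s)⟫ - ⟪fderiv ℝ u (c s) (0, v), p⟫ := by
          rw [factA, factB]
      _ = ⟪fderiv ℝ u (c s) (0, v), w s⟫ := by rw [inner_sub_right]
  have hb : ∀ s, ‖fderiv ℝ u (c s) (1, -p)‖ ≤ ‖fderiv ℝ u (c s)‖ * ‖w s‖ := by
    intro s
    set d := fderiv ℝ u (c s) (1, -p) with hd_def
    have h1 : ⟪d, d⟫ = ⟪fderiv ℝ u (c s) (0, d), w s⟫ := hw_inner s d
    have h2 : ⟪fderiv ℝ u (c s) ((0 : ℝ), d), w s⟫ ≤ ‖fderiv ℝ u (c s) ((0 : ℝ), d)‖ * ‖w s‖ :=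
      real_inner_le_norm _ _
    have h3 : ‖fderiv ℝ u (c s) ((0 : ℝ), d)‖ ≤ ‖fderiv ℝ u (c s)‖ * ‖((0 : ℝ), d)‖ :=
      (fderiv ℝ u (c s)).le_opNorm _
    have h4 : ‖((0 : ℝ), d)‖ = ‖d‖ := by
      simp [Prod.norm_def]
    rw [h4] at h3
    have h5 : ‖d‖ * ‖d‖ ≤ (‖fderiv ℝ u (c s)‖ * ‖w s‖) * ‖d‖ := by
      rw [← real_inner_self_eq_norm_mul_norm, h1]
      nlinarith [norm_nonneg (w s), norm_nonneg d, norm_nonneg (fderiv ℝ u (c s))]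
    rcases eq_or_lt_of_le (norm_nonneg d) with hd0 | hd0
    · rw [← hd0]
      positivity
    · exact le_of_mul_le_mul_right h5 hd0
  have hwzero : ∀ s, w s = 0 := by
    refine zhao_gronwall_zero hw ?_ hb ?_
    · exact ((hu.continuous_fderiv (by simp)).norm).comp
        (continuous_id.prodMk (continuous_const.sub (continuous_id.smul continuous_const)))
    · have : c 0 = (0, x) := by simp [hc_def]
      simp [hw_def, this, hp_def]
  have := hwzero t
  rw [hw_def] at this
  exact sub_eq_zero.1 this

end Core

/-- **Zhao's theorem.**  If `Q t` is a smooth family solving the Hamilton–Jacobi equation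
`∂Q_t/∂t = (1/2)⟨∇Q_t, ∇Q_t⟩` with `Q 0 = P`, then `G t z = z + t • ∇(Q t) z` is the
inverse of `F t z = z - t • ∇P z` as an identity of formal power series in `t`,
i.e. all Taylor coefficients in `t` at `t = 0` of `G t (F t z)` and `F t (G t z)` agree
with those of the constant function `z`. -/
theorem zhao_inversion_hamilton_jacobi
    (n : ℕ) (P : EuclideanSpace ℝ (Fin n) → ℝ) (hP : ContDiff ℝ (⊤ : ℕ∞) P)
    (Q : ℝ → EuclideanSpace ℝ (Fin n) → ℝ)
    (hQ : ContDiff ℝ (⊤ : ℕ∞) (fun p : ℝ × EuclideanSpace ℝ (Fin n) => Q p.1 p.2))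
    (hHJ : ∀ t z, deriv (fun s => Q s z) t =
      (1 / 2) * ⟪gradient (Q t) z, gradient (Q t) z⟫)
    (hQ0 : Q 0 = P)
    (F G : ℝ → EuclideanSpace ℝ (Fin n) → EuclideanSpace ℝ (Fin n))
    (hF : ∀ t z, F t z = z - t • gradient P z)
    (hG : ∀ t z, G t z = z + t • gradient (Q t) z) :
    ∀ z, (G 0 (F 0 z) = z ∧ F 0 (G 0 z) = z) ∧ ∀ k : ℕ, 1 ≤ k →
      iteratedDeriv k (fun t => G t (F t z)) 0 = 0 ∧
      iteratedDeriv k (fun t => F t (G t z)) 0 = 0 := by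
  set q : ℝ × EuclideanSpace ℝ (Fin n) → ℝ := fun p => Q p.1 p.2 with hq_def
  have hq : ContDiff ℝ (⊤ : ℕ∞) q := hQ
  have hqd : Differentiable ℝ q := hq.differentiable (by simp)
  set u : ℝ × EuclideanSpace ℝ (Fin n) → EuclideanSpace ℝ (Fin n) :=
    fun y => zhaoLam n (fderiv ℝ q y) with hu_def
  have hu : ContDiff ℝ (⊤ : ℕ∞) u := (zhaoLam n).contDiff.comp (hq.fderiv_right (by simp))
  -- the gradient of `Q t` is the slice of the joint derivative
  have grad_eq : ∀ (t : ℝ) (y), gradient (Q t) y = u (t, y) := by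
    intro t y
    have h2 : HasFDerivAt (fun y' : EuclideanSpace ℝ (Fin n) => ((t, y') : ℝ × _))
        (ContinuousLinearMap.inr ℝ ℝ _) y := by
      have ha : HasFDerivAt (fun _ : EuclideanSpace ℝ (Fin n) => t)
          (0 : EuclideanSpace ℝ (Fin n) →L[ℝ] ℝ) y := hasFDerivAt_const t y
      have := ha.prodMk (hasFDerivAt_id y)
      exact this
    have h1 : HasFDerivAt (Q t)
        ((fderiv ℝ q (t, y)).comp (ContinuousLinearMap.inr ℝ ℝ _)) y :=
      (hqd (t, y)).hasFDerivAt.comp y h2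
    show (InnerProductSpace.toDual ℝ _).symm (fderiv ℝ (Q t) y) = _
    rw [h1.fderiv]
    rfl
  -- the Hamilton–Jacobi equation in terms of the joint derivative
  have hHJ' : ∀ y : ℝ × EuclideanSpace ℝ (Fin n), fderiv ℝ q y (1, 0) =
      (1 / 2) * ⟪zhaoLam n (fderiv ℝ q y), zhaoLam n (fderiv ℝ q y)⟫ := by
    rintro ⟨t, y⟩
    have hc : HasDerivAt (fun s : ℝ => ((s, y) : ℝ × EuclideanSpace ℝ (Fin n)))
        ((1 : ℝ), (0 : EuclideanSpace ℝ (Fin n))) t := by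
      have ha : HasDerivAt (fun _ : ℝ => y) (0 : EuclideanSpace ℝ (Fin n)) t :=
        hasDerivAt_const t y
      exact (hasDerivAt_id t).prodMk ha
    have h1 : HasDerivAt (fun s => Q s y) (fderiv ℝ q (t, y) (1, 0)) t :=
      by have := (hqd (t, y)).hasFDerivAt.comp_hasDerivAt t hc; exact this
    have h2 := h1.deriv
    rw [hHJ t y, grad_eq t y] at h2
    exact h2.symm
  have key : ∀ (x : EuclideanSpace ℝ (Fin n)) (t : ℝ),
      u (t, x - t • u (0, x)) = u (0, x) := fun x t => zhao_core hq hHJ' x t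
  have gradP_eq : ∀ x, gradient P x = u (0, x) := by
    intro x
    rw [← hQ0]
    exact grad_eq 0 x
  have leftInv : ∀ (t : ℝ) x, G t (F t x) = x := by
    intro t x
    rw [hG, hF, grad_eq, gradP_eq]
    rw [key x t]
    abel
  intro z
  have hGz_eq : ∀ t : ℝ, G t z = z + t • u (t, z) := fun t => by rw [hG, grad_eq]
  have hG00 : G 0 (F 0 z) = z := leftInv 0 z
  have hF00 : F 0 (G 0 z) = z := by
    rw [hG, hF]
    simp
  refine ⟨⟨hG00, hF00⟩, ?_⟩
  -- right inverse near `t = 0`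
  have hgradP_cont : Continuous fun y => gradient P y := by
    have : (fun y => gradient P y) = fun y => u (0, y) := funext fun y => gradP_eq y
    rw [this]
    exact hu.continuous.comp (continuous_const.prodMk continuous_id)
  set φ : ℝ → EuclideanSpace ℝ (Fin n) := fun t => F t (G t z) with hφ_def
  have hφ_eq : φ = fun t => G t z - t • gradient P (G t z) := funext fun t => by
    show F t (G t z) = _
    rw [hF]
  have hGzc : Continuous fun t : ℝ => G t z := by
    have : (fun t : ℝ => G t z) = fun t => z + t • u (t, z) := funext hGz_eq
    rw [this]
    exact continuous_const.add (continuous_id.smul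
      (hu.continuous.comp (continuous_id.prodMk continuous_const)))
  have hφc : Continuous φ := by
    rw [hφ_eq]
    exact hGzc.sub (continuous_id.smul (hgradP_cont.comp hGzc))
  have hφ0 : φ 0 = z := hF00
  obtain ⟨K, s, hs, hlip⟩ :=
    ((hu.of_le (by simp)).contDiffAt (x := ((0 : ℝ), z))).exists_lipschitzOnWith
  have hev1 : ∀ᶠ t in nhds (0 : ℝ), ((t, φ t) : ℝ × EuclideanSpace ℝ (Fin n)) ∈ s := by
    have hcont : ContinuousAt (fun t : ℝ => ((t, φ t) : ℝ × EuclideanSpace ℝ (Fin n))) 0 :=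
      (continuous_id.prodMk hφc).continuousAt
    refine hcont.eventually_mem ?_
    simpa [hφ0] using hs
  have hev2 : ∀ᶠ t in nhds (0 : ℝ), ((t, z) : ℝ × EuclideanSpace ℝ (Fin n)) ∈ s := by
    have hcont : ContinuousAt (fun t : ℝ => ((t, z) : ℝ × EuclideanSpace ℝ (Fin n))) 0 :=
      (continuous_id.prodMk continuous_const).continuousAt
    refine hcont.eventually_mem ?_
    simpa using hs
  have hev3 : ∀ᶠ t : ℝ in nhds 0, |t| * (K : ℝ) < 1 := by
    have hc : ContinuousAt (fun t : ℝ => |t| * (K : ℝ)) 0 := by fun_prop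
    have h0 : |(0 : ℝ)| * (K : ℝ) = 0 := by simp
    have htend : Filter.Tendsto (fun t : ℝ => |t| * (K : ℝ)) (nhds 0) (nhds 0) := by
      have := hc.tendsto
      rwa [h0] at this
    exact htend.eventually_lt_const one_pos
  have hright : ∀ᶠ t in nhds (0 : ℝ), φ t = z := by
    filter_upwards [hev1, hev2, hev3] with t h1 h2 h3
    have hkey : G t (φ t) = G t z := leftInv t (G t z)
    have h4 : φ t + t • u (t, φ t) = z + t • u (t, z) := by
      have e1 : G t (φ t) = φ t + t • u (t, φ t) := by rw [hG, grad_eq]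
      rw [← e1, hkey, hGz_eq]
    have h5 : φ t - z = t • u (t, z) - t • u (t, φ t) := by
      rw [sub_eq_sub_iff_add_eq_add, h4]
      abel
    have h7 : dist (u (t, z)) (u (t, φ t)) ≤
        (K : ℝ) * dist ((t, z) : ℝ × EuclideanSpace ℝ (Fin n)) ((t, φ t)) :=
      hlip.dist_le_mul _ h2 _ h1
    rw [Prod.dist_eq] at h7
    simp only [dist_self] at h7
    have h8 : max (0 : ℝ) (dist z (φ t)) = dist z (φ t) := max_eq_right dist_nonneg
    rw [h8, dist_eq_norm, dist_eq_norm, norm_sub_rev z] at h7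
    have h9 : ‖φ t - z‖ ≤ |t| * ((K : ℝ) * ‖φ t - z‖) := by
      calc ‖φ t - z‖ = ‖t • (u (t, z) - u (t, φ t))‖ := by rw [h5, smul_sub]
        _ = |t| * ‖u (t, z) - u (t, φ t)‖ := by rw [norm_smul, Real.norm_eq_abs]
        _ ≤ |t| * ((K : ℝ) * ‖φ t - z‖) := by
            apply mul_le_mul_of_nonneg_left _ (abs_nonneg t)
            rw [← dist_eq_norm]
            exact h7
    have h10 : ‖φ t - z‖ = 0 := by nlinarith [norm_nonneg (φ t - z), abs_nonneg t, K.coe_nonneg]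
    have := norm_eq_zero.1 h10
    exact sub_eq_zero.1 this
  intro k hk
  have hconst : ∀ (c : EuclideanSpace ℝ (Fin n)),
      iteratedDeriv k (fun _ : ℝ => c) (0 : ℝ) = 0 := by
    intro c
    rw [iteratedDeriv_eq_iteratedFDeriv, iteratedFDeriv_const_of_ne (by omega)]
    simp
  constructor
  · have : (fun t => G t (F t z)) = fun _ => z := funext fun t => leftInv t z
    rw [this]
    exact hconst z
  · have h1 : iteratedDeriv k (fun t => F t (G t z)) 0 = iteratedDeriv k (fun _ : ℝ => z) 0 :=
      Filter.EventuallyEq.iteratedDeriv_eq k hright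
    rw [h1]
    exact hconst z
end

section
/- Let M : ℝⁿ → ℝⁿ be smooth and suppose N_t : ℝⁿ → ℝⁿ is a smooth family (smooth in t) such that G_t(z) = z + t N_t(z) is a two-sided inverse of F_t(z) = z - t M(z) for all t in an interval around 0, i.e. N_t(F_t(z)) = M(z) and M(G_t(z)) = N_t(z). Then N_t satisfies the inviscid Burgers-type equation ∂N_t/∂t = J(N_t) N_t, where J(N_t) is the Jacobian matrix of N_t. -/
/-- If `G t z = z + t • N t z` is a two-sided inverse of `F t z = z - t • M z` for `t` in
an interval around `0`, in the sense that `N t (F t z) = M z` and `M (G t z) = N t z`,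
then `N` satisfies the inviscid Burgers-type equation `∂N_t/∂t = J(N_t) N_t`. -/
theorem burgers_equation_of_inverse
    (n : ℕ) (ε : ℝ) (hε : 0 < ε)
    (M : EuclideanSpace ℝ (Fin n) → EuclideanSpace ℝ (Fin n))
    (hM : ContDiff ℝ (⊤ : ℕ∞) M)
    (N : ℝ → EuclideanSpace ℝ (Fin n) → EuclideanSpace ℝ (Fin n))
    (hN : ContDiff ℝ (⊤ : ℕ∞) (fun p : ℝ × EuclideanSpace ℝ (Fin n) => N p.1 p.2))
    (F G : ℝ → EuclideanSpace ℝ (Fin n) → EuclideanSpace ℝ (Fin n))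
    (hF : ∀ t z, F t z = z - t • M z)
    (hG : ∀ t z, G t z = z + t • N t z)
    (hinv₁ : ∀ t ∈ Set.Ioo (-ε) ε, ∀ z, N t (F t z) = M z)
    (hinv₂ : ∀ t ∈ Set.Ioo (-ε) ε, ∀ z, M (G t z) = N t z) :
    ∀ t ∈ Set.Ioo (-ε) ε, ∀ z,
      deriv (fun s => N s z) t = fderiv ℝ (N t) z (N t z) := by
  intro t ht z
  have hf : Differentiable ℝ (fun p : ℝ × EuclideanSpace ℝ (Fin n) => N p.1 p.2) :=
    hN.differentiable (by simp)
  set w : EuclideanSpace ℝ (Fin n) := G t z with hw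
  have hMw : M w = N t z := hinv₂ t ht z
  have hFw : F t w = z := by
    rw [hF, hMw, hw, hG]
    abel
  set Df := fderiv ℝ (fun p : ℝ × EuclideanSpace ℝ (Fin n) => N p.1 p.2) (t, z) with hDf
  have hfD : HasFDerivAt (fun p : ℝ × EuclideanSpace ℝ (Fin n) => N p.1 p.2) Df (t, z) :=
    (hf (t, z)).hasFDerivAt
  -- the curve s ↦ F s w
  have hcurve : HasDerivAt (fun s => F s w) (-(M w)) t := by
    have heq : (fun s => F s w) = fun s => w - s • M w := by
      funext s; rw [hF]
    rw [heq]
    simpa using ((hasDerivAt_id t).smul_const (M w)).const_sub w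
  have hφ : HasDerivAt (fun s => ((s, F s w) : ℝ × EuclideanSpace ℝ (Fin n)))
      ((1 : ℝ), -(M w)) t := (hasDerivAt_id t).prodMk hcurve
  have hfD' : HasFDerivAt (fun p : ℝ × EuclideanSpace ℝ (Fin n) => N p.1 p.2) Df
      (t, F t w) := by rw [hFw]; exact hfD
  have hg : HasDerivAt (fun s => N s (F s w)) (Df ((1 : ℝ), -(M w))) t :=
    by exact hfD'.comp_hasDerivAt t hφ
  -- the composition is locally constant equal to M w
  have hconst : (fun s => N s (F s w)) =ᶠ[nhds t] fun _ => M w := by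
    filter_upwards [isOpen_Ioo.mem_nhds ht] with s hs
    exact hinv₁ s hs w
  have hzero : Df ((1 : ℝ), -(M w)) = 0 := by
    rw [← hg.deriv, hconst.deriv_eq, deriv_const]
  -- derivative in t of s ↦ N s z
  have hL : HasDerivAt (fun s => N s z) (Df ((1 : ℝ), (0 : EuclideanSpace ℝ (Fin n)))) t := by
    have h1 : HasDerivAt (fun s => ((s, z) : ℝ × EuclideanSpace ℝ (Fin n)))
        ((1 : ℝ), (0 : EuclideanSpace ℝ (Fin n))) t :=
      (hasDerivAt_id t).prodMk (hasDerivAt_const t z)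
    exact hfD.comp_hasDerivAt t h1
  -- spatial derivative of N t
  have hR : HasFDerivAt (N t)
      (Df.comp (((0 : EuclideanSpace ℝ (Fin n) →L[ℝ] ℝ)).prod
        (ContinuousLinearMap.id ℝ (EuclideanSpace ℝ (Fin n))))) z := by
    have h2 : HasFDerivAt (fun y : EuclideanSpace ℝ (Fin n) => ((t, y) : ℝ × EuclideanSpace ℝ (Fin n)))
        (((0 : EuclideanSpace ℝ (Fin n) →L[ℝ] ℝ)).prod
          (ContinuousLinearMap.id ℝ (EuclideanSpace ℝ (Fin n)))) z :=
      (hasFDerivAt_const t z).prodMk (hasFDerivAt_id z)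
    exact hfD.comp z h2
  have hsplit : Df ((1 : ℝ), (0 : EuclideanSpace ℝ (Fin n))) = Df ((0 : ℝ), M w) := by
    have heq : ((1 : ℝ), (0 : EuclideanSpace ℝ (Fin n)))
        = ((1 : ℝ), -(M w)) + ((0 : ℝ), M w) := by
      simp [Prod.ext_iff]
    rw [heq, map_add, hzero, zero_add]
  rw [hL.deriv, hsplit, hMw, hR.fderiv]
  simp
end
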